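/- arXiv:math/0308067 — 2 statements merged into one kernel-verified Lean document; each statement's English description precedes it below -/
import Mathlib

section
/- For all K ≥ 1 and C, R ≥ 0 there exist K' ≥ 1 and C' ≥ 0 with the following property. Let G be a group with the word metric coming from a finite generating set S, let N be a normal subgroup, and equip G/N with the word metric coming from the image of S. Suppose Φ : G → G is a (K,C)-quasi-isometry that R-coarsely respects the cosets of N, and suppose φ : G/N → G/N is any map such that for every g ∈ G the Hausdorff distance in G between Φ(gN) and the coset of N corresponding to φ(gN) is at most R. Then φ is a (K',C')-quasi-isometry of G/N. -/
open Pointwise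

/-- The word length of `g` with respect to the generating set `S`: the least `n` such that
`g` is a product of `n` elements of `S ∪ S⁻¹`. -/
noncomputable def wordLength {G : Type*} [Group G] (S : Set G) (g : G) : ℕ :=
  sInf {n : ℕ | g ∈ (S ∪ S⁻¹) ^ n}

/-- `dist` on `G` is the word metric coming from the finite generating set `S`. -/
def IsWordMetric {G : Type*} [Group G] [MetricSpace G] (S : Set G) : Prop :=
  S.Finite ∧ Subgroup.closure S = ⊤ ∧
    ∀ g h : G, dist g h = (wordLength S (g⁻¹ * h) : ℝ)

/-- `f` is a `(K,C)`-quasi-isometry between metric spaces. -/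
def IsQuasiIsometry {X Y : Type*} [MetricSpace X] [MetricSpace Y] (K C : ℝ) (f : X → Y) : Prop :=
  (∀ a b : X, (1 / K) * dist a b - C ≤ dist (f a) (f b) ∧
      dist (f a) (f b) ≤ K * dist a b + C) ∧
    ∀ y : Y, ∃ a : X, dist (f a) y ≤ C

/-- `Φ : G → G` `R`-coarsely respects the cosets of the normal subgroup `N`: for every `g`
there is `g'` such that the Hausdorff distance between `Φ(gN)` and `g'N` is at most `R`. -/
def CoarselyRespectsCosets {G : Type*} [Group G] [MetricSpace G] (N : Subgroup G)
    (Φ : G → G) (R : ℝ) : Prop :=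
  ∀ g : G, ∃ g' : G,
    EMetric.hausdorffEdist (Φ '' (g • (N : Set G))) (g' • (N : Set G)) ≤ ENNReal.ofReal R

/-!
For word metrics, the quotient map `G → G ⧸ N` is a submetry: it maps each closed ball onto the
closed ball of the same radius, because a word for `gN` in the image generators lifts to a word of
the same length for some element of `gN`. So the distance in `G ⧸ N` is the distance between
cosets, and it is attained from any point of the first coset. The hypothesis on `φ` then makes
`φ ∘ π` uniformly close to `π ∘ Φ`, and every point of the coset `φ(π x)` close to a point of
`Φ(π⁻¹(π x))`; the quasi-isometry inequalities of `Φ` descend through these two facts, at the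
cost of an additive constant. Since a Hausdorff distance need not be attained, "close" means
within `R + 1`.
-/

section WordLength

variable {G H : Type*} [Group G] [Group H] {S : Set G}

lemma exists_mem_pow_of_closure_eq_top (hS : Subgroup.closure S = ⊤) (g : G) :
    ∃ n, g ∈ (S ∪ S⁻¹) ^ n := by
  have hg : g ∈ Submonoid.closure (S ∪ S⁻¹) := by
    rw [← Subgroup.closure_toSubmonoid, hS]
    trivial
  induction hg using Submonoid.closure_induction with
  | mem x hx => exact ⟨1, by rwa [pow_one]⟩
  | one => exact ⟨0, Set.mem_one.mpr rfl⟩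
  | mul x y _ _ hx hy =>
    obtain ⟨m, hm⟩ := hx
    obtain ⟨n, hn⟩ := hy
    exact ⟨m + n, pow_add (S ∪ S⁻¹) m n ▸ Set.mul_mem_mul hm hn⟩

lemma mem_pow_wordLength (hS : Subgroup.closure S = ⊤) (g : G) :
    g ∈ (S ∪ S⁻¹) ^ wordLength S g :=
  Nat.sInf_mem (exists_mem_pow_of_closure_eq_top hS g)

lemma wordLength_le_of_mem_pow {g : G} {n : ℕ} (h : g ∈ (S ∪ S⁻¹) ^ n) : wordLength S g ≤ n :=
  Nat.sInf_le h

lemma image_union_inv_pow (f : G →* H) (n : ℕ) :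
    (f '' S ∪ (f '' S)⁻¹) ^ n = f '' ((S ∪ S⁻¹) ^ n) := by
  rw [Set.image_pow, Set.image_union, Set.image_inv]

lemma wordLength_map_le (f : G →* H) (hS : Subgroup.closure S = ⊤) (g : G) :
    wordLength (f '' S) (f g) ≤ wordLength S g :=
  wordLength_le_of_mem_pow <| by
    rw [image_union_inv_pow]
    exact Set.mem_image_of_mem f (mem_pow_wordLength hS g)

lemma exists_map_eq_wordLength_le (f : G →* H) (hfS : Subgroup.closure (f '' S) = ⊤) (h : H) :
    ∃ g, f g = h ∧ wordLength S g ≤ wordLength (f '' S) h := by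
  have hh := mem_pow_wordLength hfS h
  rw [image_union_inv_pow] at hh
  obtain ⟨g, hg, rfl⟩ := hh
  exact ⟨g, rfl, wordLength_le_of_mem_pow hg⟩

end WordLength

def IsSubmetry {X Y : Type*} [PseudoMetricSpace X] [PseudoMetricSpace Y] (π : X → Y) : Prop :=
  ∀ x r, π '' Metric.closedBall x r = Metric.closedBall (π x) r

namespace IsSubmetry

variable {X Y : Type*} [PseudoMetricSpace X] [PseudoMetricSpace Y] {π : X → Y}

lemma of_dist_le (hle : ∀ a b, dist (π a) (π b) ≤ dist a b)
    (hlift : ∀ x y, ∃ x', π x' = y ∧ dist x x' ≤ dist (π x) y) : IsSubmetry π := by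
  refine fun x r => Set.Subset.antisymm ?_ fun y hy => ?_
  · rintro _ ⟨x', hx', rfl⟩
    exact (hle x' x).trans hx'
  · obtain ⟨x', rfl, hx'⟩ := hlift x y
    refine ⟨x', ?_, rfl⟩
    rw [Metric.mem_closedBall, dist_comm] at hy ⊢
    exact hx'.trans hy

lemma dist_le (hπ : IsSubmetry π) (a b : X) : dist (π a) (π b) ≤ dist a b := by
  have hb : π b ∈ Metric.closedBall (π a) (dist a b) := by
    rw [← hπ]
    exact Set.mem_image_of_mem π (Metric.mem_closedBall.2 (dist_comm b a).le)
  rw [dist_comm]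
  exact hb

lemma exists_dist_le (hπ : IsSubmetry π) (x : X) (y : Y) :
    ∃ x', π x' = y ∧ dist x x' ≤ dist (π x) y := by
  have hy : y ∈ π '' Metric.closedBall x (dist (π x) y) := by
    rw [hπ]
    exact Metric.mem_closedBall.2 (dist_comm y (π x)).le
  obtain ⟨x', hx', rfl⟩ := hy
  exact ⟨x', rfl, by rw [dist_comm]; exact hx'⟩

lemma surjective [Nonempty X] (hπ : IsSubmetry π) : Function.Surjective π :=
  fun y => (hπ.exists_dist_le (Classical.arbitrary X) y).imp fun _ h => h.1

end IsSubmetry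

lemma smul_coe_eq_preimage_mk {G : Type*} [Group G] (s : Subgroup G) (g : G) :
    g • (s : Set G) = QuotientGroup.mk ⁻¹' {(QuotientGroup.mk g : G ⧸ s)} := by
  ext x
  rw [mem_leftCoset_iff, Set.mem_preimage, Set.mem_singleton_iff, eq_comm, QuotientGroup.eq]
  rfl

lemma IsWordMetric.isSubmetry_mk {G : Type*} [Group G] [MetricSpace G] {S : Set G}
    {N : Subgroup G} [N.Normal] [MetricSpace (G ⧸ N)] (hS : IsWordMetric S)
    (hSq : IsWordMetric ((QuotientGroup.mk : G → G ⧸ N) '' S)) :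
    IsSubmetry (QuotientGroup.mk : G → G ⧸ N) := by
  refine IsSubmetry.of_dist_le (fun a b => ?_) fun x y => ?_
  · rw [hS.2.2, hSq.2.2, ← QuotientGroup.mk_inv, ← QuotientGroup.mk_mul]
    exact_mod_cast wordLength_map_le (QuotientGroup.mk' N) hS.2.1 (a⁻¹ * b)
  · obtain ⟨z, hz, hzS⟩ := exists_map_eq_wordLength_le (QuotientGroup.mk' N) hSq.2.1
      ((x : G ⧸ N)⁻¹ * y)
    refine ⟨x * z, ?_, ?_⟩
    · change QuotientGroup.mk' N (x * z) = y
      rw [map_mul, hz, QuotientGroup.mk'_apply, mul_inv_cancel_left]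
    · rw [hS.2.2, hSq.2.2, inv_mul_cancel_left]
      exact_mod_cast hzS

lemma exists_dist_lt_of_hausdorffEDist_lt_ofReal {X : Type*} [PseudoMetricSpace X] {A B : Set X}
    {r : ℝ} (h : Metric.hausdorffEDist A B < ENNReal.ofReal r) {x : X} (hx : x ∈ A) :
    ∃ y ∈ B, dist x y < r := by
  obtain ⟨y, hy, hxy⟩ := Metric.exists_edist_lt_of_hausdorffEDist_lt hx h
  exact ⟨y, hy, edist_lt_ofReal.1 hxy⟩

section InducedUpTo

variable {X Y : Type*} [PseudoMetricSpace X] {π : X → Y} {Φ : X → X} {φ : Y → Y} {r : ℝ}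

def IsInducedUpTo (π : X → Y) (Φ : X → X) (φ : Y → Y) (r : ℝ) : Prop :=
  ∀ x, Metric.hausdorffEDist (Φ '' (π ⁻¹' {π x})) (π ⁻¹' {φ (π x)}) < ENNReal.ofReal r

namespace IsInducedUpTo

lemma exists_mem_fiber_dist_lt (hφ : IsInducedUpTo π Φ φ r) (x : X) :
    ∃ p, π p = φ (π x) ∧ dist (Φ x) p < r :=
  exists_dist_lt_of_hausdorffEDist_lt_ofReal (hφ x) ⟨x, rfl, rfl⟩

lemma exists_dist_image_lt (hφ : IsInducedUpTo π Φ φ r) {x p : X} (hp : π p = φ (π x)) :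
    ∃ x', π x' = π x ∧ dist p (Φ x') < r := by
  have hx := hφ x
  rw [Metric.hausdorffEDist_comm] at hx
  obtain ⟨_, ⟨x', hx', rfl⟩, hpx⟩ := exists_dist_lt_of_hausdorffEDist_lt_ofReal hx hp
  exact ⟨x', hx', hpx⟩

end IsInducedUpTo

end InducedUpTo

namespace IsSubmetry

variable {X Y : Type*} [MetricSpace X] [MetricSpace Y] {π : X → Y} {Φ : X → X} {φ : Y → Y}
  {K C r : ℝ}

lemma dist_map_comp_lt (hπ : IsSubmetry π) (hφ : IsInducedUpTo π Φ φ r)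
    (x : X) : dist (φ (π x)) (π (Φ x)) < r := by
  obtain ⟨p, hp, hxp⟩ := hφ.exists_mem_fiber_dist_lt x
  rw [← hp, dist_comm]
  exact (hπ.dist_le _ _).trans_lt hxp

lemma dist_map_le (hπ : IsSubmetry π) (hK : 0 ≤ K) (hΦ : IsQuasiIsometry K C Φ)
    (hφ : IsInducedUpTo π Φ φ r) (a b : X) :
    dist (φ (π a)) (φ (π b)) ≤ K * dist (π a) (π b) + (C + 2 * r) := by
  obtain ⟨b', hb', hab'⟩ := hπ.exists_dist_le a (π b)
  have hΦab' := (hΦ.1 a b').2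
  have ha := hπ.dist_map_comp_lt hφ a
  have hb := hπ.dist_map_comp_lt hφ b'
  rw [hb'] at hb
  calc dist (φ (π a)) (φ (π b))
      ≤ dist (φ (π a)) (π (Φ a)) + dist (π (Φ a)) (π (Φ b')) + dist (π (Φ b')) (φ (π b)) :=
        dist_triangle4 _ _ _ _
    _ ≤ r + (K * dist a b' + C) + r := by
        linarith [(hπ.dist_le (Φ a) (Φ b')).trans hΦab', dist_comm (π (Φ b')) (φ (π b))]
    _ ≤ K * dist (π a) (π b) + (C + 2 * r) := by
        linarith [mul_le_mul_of_nonneg_left hab' hK]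

lemma le_dist_map (hπ : IsSubmetry π) (hK : 0 ≤ K) (hΦ : IsQuasiIsometry K C Φ)
    (hφ : IsInducedUpTo π Φ φ r) (a b : X) :
    1 / K * dist (π a) (π b) - (C + 2 * r) ≤ dist (φ (π a)) (φ (π b)) := by
  obtain ⟨p, hp, hap⟩ := hφ.exists_mem_fiber_dist_lt a
  obtain ⟨q, hq, hpq⟩ := hπ.exists_dist_le p (φ (π b))
  obtain ⟨b', hb', hqb'⟩ := hφ.exists_dist_image_lt hq
  have hΦab' := (hΦ.1 a b').1
  have hab' : dist (π a) (π b) ≤ dist a b' := hb' ▸ hπ.dist_le a b'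
  have hΦ_close : dist (Φ a) (Φ b') < dist (φ (π a)) (φ (π b)) + 2 * r := by
    calc dist (Φ a) (Φ b') ≤ dist (Φ a) p + dist p q + dist q (Φ b') := dist_triangle4 _ _ _ _
      _ < r + dist (φ (π a)) (φ (π b)) + r := by
        rw [← hp]
        linarith
      _ = dist (φ (π a)) (φ (π b)) + 2 * r := by ring
  have hπab : 1 / K * dist (π a) (π b) ≤ 1 / K * dist a b' := by gcongr
  linarith

lemma exists_dist_map_lt (hπ : IsSubmetry π) (hΦ : IsQuasiIsometry K C Φ)
    (hφ : IsInducedUpTo π Φ φ r) (x : X) : ∃ a, dist (φ (π a)) (π x) < r + C := by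
  obtain ⟨a, ha⟩ := hΦ.2 x
  refine ⟨a, ?_⟩
  calc dist (φ (π a)) (π x) ≤ dist (φ (π a)) (π (Φ a)) + dist (π (Φ a)) (π x) :=
        dist_triangle _ _ _
    _ < r + C := add_lt_add_of_lt_of_le (hπ.dist_map_comp_lt hφ a) ((hπ.dist_le _ _).trans ha)

theorem isQuasiIsometry_of_isInducedUpTo [Nonempty X] (hπ : IsSubmetry π) (hK : 0 ≤ K)
    (hΦ : IsQuasiIsometry K C Φ) (hφ : IsInducedUpTo π Φ φ r) :
    IsQuasiIsometry K (C + 2 * r) φ := by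
  refine ⟨fun a b => ?_, fun y => ?_⟩
  · obtain ⟨x, rfl⟩ := hπ.surjective a
    obtain ⟨z, rfl⟩ := hπ.surjective b
    exact ⟨hπ.le_dist_map hK hΦ hφ x z, hπ.dist_map_le hK hΦ hφ x z⟩
  · obtain ⟨x, rfl⟩ := hπ.surjective y
    obtain ⟨a, ha⟩ := hπ.exists_dist_map_lt hΦ hφ x
    have hr : 0 < r := dist_nonneg.trans_lt (hπ.dist_map_comp_lt hφ a)
    exact ⟨π a, by linarith⟩

end IsSubmetry

/-- For all `K ≥ 1`, `C, R ≥ 0` there exist `K' ≥ 1`, `C' ≥ 0` such that: for any group `G`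
with a word metric, normal subgroup `N`, and `G ⧸ N` given the word metric of the image
generating set, if `Φ : G → G` is a `(K,C)`-quasi-isometry `R`-coarsely respecting the cosets
of `N` and `φ : G ⧸ N → G ⧸ N` is any map such that for every `g` the Hausdorff distance in `G`
between `Φ(gN)` and the coset corresponding to `φ(gN)` is at most `R`, then `φ` is a
`(K',C')`-quasi-isometry. -/
theorem induced_quotient_quasiIsometry (K C R : ℝ) (hK : 1 ≤ K) (hC : 0 ≤ C) (hR : 0 ≤ R) :
    ∃ K' C' : ℝ, 1 ≤ K' ∧ 0 ≤ C' ∧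
      ∀ (G : Type) [Group G] [MetricSpace G] (S : Set G), IsWordMetric S →
        ∀ (N : Subgroup G) [N.Normal] [MetricSpace (G ⧸ N)],
          IsWordMetric ((QuotientGroup.mk : G → G ⧸ N) '' S) →
          ∀ (Φ : G → G) (φ : G ⧸ N → G ⧸ N),
            IsQuasiIsometry K C Φ → CoarselyRespectsCosets N Φ R →
            (∀ g : G,
              EMetric.hausdorffEdist (Φ '' (g • (N : Set G)))
                ((QuotientGroup.mk : G → G ⧸ N) ⁻¹' {φ (QuotientGroup.mk g)}) ≤
                ENNReal.ofReal R) →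
            IsQuasiIsometry K' C' φ := by
  refine ⟨K, C + 2 * (R + 1), hK, by positivity, ?_⟩
  intro G _ _ S hS N _ _ hSq Φ φ hΦ _ hφ
  refine (hS.isSubmetry_mk hSq).isQuasiIsometry_of_isInducedUpTo (by linarith) hΦ fun g => ?_
  rw [← smul_coe_eq_preimage_mk]
  exact (hφ g).trans_lt ((ENNReal.ofReal_lt_ofReal_iff (by linarith)).2 (by linarith))
end

section
/- Let G be a group acting on the real line ℝ by isometries such that the action is properly discontinuous (for every compact set K ⊆ ℝ, the set of g ∈ G with g·K ∩ K ≠ ∅ is finite) and cocompact (there is a compact set K₀ ⊆ ℝ with ⋃_{g ∈ G} g·K₀ = ℝ). Then G contains an infinite cyclic subgroup of finite index. -/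
/-!
Every isometry of `ℝ` is a translation or a reflection. Cocompactness puts orbit points of `0`
on both sides of `0`, and from the corresponding elements (or a product of two reflections) one
gets a translation `t` by some `a > 0`. Every `g` is then `t ^ n * f` with `f • 0 ∈ [0, a]`,
and by properness there are only finitely many such `f`, so `⟨t⟩` has finite index.
-/

open Pointwise

theorem Isometry.real_eq_add_or_eq_sub {f : ℝ → ℝ} (hf : Isometry f) :
    (∀ x, f x = f 0 + x) ∨ ∀ x, f x = f 0 - x := by
  have key : ∀ x y, f x - f y = x - y ∨ f x - f y = -(x - y) := fun x y =>
    abs_eq_abs.mp (by simpa only [Real.dist_eq] using hf.dist_eq x y)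
  rcases key 1 0 with h1 | h1
  · left
    intro x
    rcases key x 0 with h | h <;> rcases key x 1 with h' | h' <;> linarith
  · right
    intro x
    rcases key x 0 with h | h <;> rcases key x 1 with h' | h' <;> linarith

theorem zpow_smul_eq_add_zsmul {G X : Type*} [Group G] [AddCommGroup X] [MulAction G X]
    {t : G} {a : X} (ht : ∀ x, t • x = x + a) (n : ℤ) (x : X) : t ^ n • x = x + n • a := by
  have ht_inv : ∀ x, t⁻¹ • x = x - a := fun x => by
    rw [eq_sub_iff_add_eq, ← ht, smul_inv_smul]
  induction n using Int.induction_on generalizing x with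
  | zero => simp
  | succ n ih => rw [zpow_add_one, mul_smul, ht, ih, add_zsmul, one_zsmul]; abel
  | pred n ih => rw [zpow_sub_one, mul_smul, ht_inv, ih, sub_zsmul, one_zsmul]; abel

theorem Subgroup.finiteIndex_of_forall_mul_inv_mem {G : Type*} [Group G] {H : Subgroup G}
    {F : Set G} (hF : F.Finite) (hcover : ∀ g, ∃ f ∈ F, g * f⁻¹ ∈ H) : H.FiniteIndex := by
  have : Finite (G ⧸ H) := by
    refine Set.finite_univ_iff.mp ((hF.image fun f => ((f⁻¹ : G) : G ⧸ H)).subset ?_)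
    rintro ⟨g⟩ -
    obtain ⟨f, hf, hgf⟩ := hcover g⁻¹
    refine ⟨f, hf, QuotientGroup.eq.mpr ?_⟩
    simpa using H.inv_mem hgf
  exact H.finiteIndex_of_finite_quotient

theorem exists_dist_smul_le_of_iUnion_smul_eq_univ {G X : Type*} [PseudoMetricSpace X]
    [SMul G X] (hiso : ∀ g : G, Isometry fun x : X => g • x) {K : Set X}
    (hK : Bornology.IsBounded K) (hcover : ⋃ g : G, g • K = Set.univ) (x₀ : X) :
    ∃ r, ∀ x : X, ∃ g : G, dist (g • x₀) x ≤ r := by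
  obtain ⟨r, hr⟩ := hK.subset_closedBall x₀
  refine ⟨r, fun x => ?_⟩
  have hx : x ∈ ⋃ g : G, g • K := hcover ▸ Set.mem_univ x
  obtain ⟨g, k, hk, rfl⟩ : ∃ g : G, ∃ k ∈ K, g • k = x := by
    simpa [Set.mem_smul_set] using hx
  refine ⟨g, ?_⟩
  rw [(hiso g).dist_eq, dist_comm]
  exact hr hk

section RealLine

variable {G : Type*} [Group G] [MulAction G ℝ]

theorem exists_translation_of_smul_zero_pos_neg (hiso : ∀ g : G, Isometry fun x : ℝ => g • x)
    {g h : G} (hg : 0 < g • (0 : ℝ)) (hh : h • (0 : ℝ) < 0) :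
    ∃ t : G, 0 < t • (0 : ℝ) ∧ ∀ x, t • x = x + t • (0 : ℝ) := by
  rcases (hiso g).real_eq_add_or_eq_sub with hg' | hg'
  · exact ⟨g, hg, fun x => by rw [hg', add_comm]⟩
  rcases (hiso h).real_eq_add_or_eq_sub with hh' | hh'
  · have h_inv : ∀ x : ℝ, h⁻¹ • x = x - h • 0 := fun x => by
      rw [eq_sub_iff_add_eq, add_comm, ← hh', smul_inv_smul]
    exact ⟨h⁻¹, by rw [h_inv]; linarith, fun x => by rw [h_inv, h_inv]; ring⟩
  · refine ⟨g * h, ?_, fun x => ?_⟩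
    · rw [mul_smul, hg' (h • 0)]
      linarith
    · rw [mul_smul, mul_smul, hg' (h • x), hg' (h • 0), hh' x]
      ring

theorem finiteIndex_zpowers_of_forall_smul_eq_add
    (hproper : ∀ K : Set ℝ, IsCompact K → {g : G | ((g • K) ∩ K).Nonempty}.Finite)
    {t : G} {a : ℝ} (ha : 0 < a) (ht : ∀ x, t • x = x + a) :
    (Subgroup.zpowers t).FiniteIndex := by
  have hF : {f : G | f • (0 : ℝ) ∈ Set.Icc 0 a}.Finite :=
    (hproper _ isCompact_Icc).subset fun f hf =>
      ⟨f • 0, Set.smul_mem_smul_set ⟨le_rfl, ha.le⟩, hf⟩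
  refine Subgroup.finiteIndex_of_forall_mul_inv_mem hF fun g => ?_
  set n := ⌊g • (0 : ℝ) / a⌋
  have hf : (t ^ (-n) * g) • (0 : ℝ) = g • 0 - n * a := by
    rw [mul_smul, zpow_smul_eq_add_zsmul ht, zsmul_eq_mul, Int.cast_neg]
    ring
  refine ⟨t ^ (-n) * g, ?_, ?_⟩
  · rw [Set.mem_ofPred_eq, hf]
    exact ⟨Int.sub_floor_div_mul_nonneg _ ha, (Int.sub_floor_div_mul_lt _ ha).le⟩
  · simp [Subgroup.zpow_mem_zpowers]

end RealLine

/-- If a group `G` acts on `ℝ` by isometries, properly discontinuously and cocompactly, then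
`G` contains an infinite cyclic subgroup of finite index. -/
theorem exists_infinite_cyclic_finiteIndex_of_proper_cocompact_isometric_action
    {G : Type*} [Group G] [MulAction G ℝ]
    (hiso : ∀ g : G, Isometry fun x : ℝ => g • x)
    (hproper : ∀ K : Set ℝ, IsCompact K → {g : G | ((g • K) ∩ K).Nonempty}.Finite)
    (hcocompact : ∃ K₀ : Set ℝ, IsCompact K₀ ∧ ⋃ g : G, g • K₀ = Set.univ) :
    ∃ H : Subgroup G,
      (∃ g : G, (∀ n : ℕ, 1 ≤ n → g ^ n ≠ 1) ∧ H = Subgroup.zpowers g) ∧ H.FiniteIndex := by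
  obtain ⟨K₀, hK₀, hcover⟩ := hcocompact
  obtain ⟨r, hr⟩ := exists_dist_smul_le_of_iUnion_smul_eq_univ hiso hK₀.isBounded hcover 0
  obtain ⟨g, hg⟩ := hr (r + 1)
  obtain ⟨h, hh⟩ := hr (-(r + 1))
  rw [Real.dist_eq, abs_le] at hg hh
  obtain ⟨t, ht0, ht⟩ :=
    exists_translation_of_smul_zero_pos_neg hiso (g := g) (h := h) (by linarith) (by linarith)
  refine ⟨_, ⟨t, fun n hn htn => ?_, rfl⟩, finiteIndex_zpowers_of_forall_smul_eq_add hproper ht0 ht⟩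
  have h_pow := zpow_smul_eq_add_zsmul ht n 0
  rw [zpow_natCast, htn, one_smul, zero_add, natCast_zsmul] at h_pow
  exact (nsmul_pos ht0 (by omega)).ne h_pow
end
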